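/- arXiv:1506.00351 — 8 statements merged into one kernel-verified Lean document; each statement's English description precedes it below -/
import Mathlib

section
/- Let A be a commutative ring and let M, N ∈ SL₂(A). Then tr(MNM⁻¹N⁻¹) − 2 = tr(M)² + tr(N)² + tr(MN)² − tr(M)·tr(N)·tr(MN) − 4. -/
theorem trace_commutator_sub_two (A : Type*) [CommRing A]
    (M N : Matrix (Fin 2) (Fin 2) A) (hM : M.det = 1) (hN : N.det = 1) :
    (M * N * M⁻¹ * N⁻¹).trace - 2 =
      M.trace ^ 2 + N.trace ^ 2 + (M * N).trace ^ 2
        - M.trace * N.trace * (M * N).trace - 4 := by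
  rw [Matrix.inv_def, Matrix.inv_def, hM, hN]
  simp only [Ring.inverse_one, one_smul]
  rw [Matrix.det_fin_two] at hM hN
  simp only [Matrix.trace_fin_two, Matrix.adjugate_fin_two, Matrix.mul_apply,
    Fin.sum_univ_two, Matrix.of_apply, Matrix.cons_val', Matrix.cons_val_zero,
    Matrix.cons_val_one, Matrix.head_cons, Matrix.empty_val',
    Matrix.cons_val_fin_one, Matrix.head_fin_const]
  linear_combination (N 0 0 ^ 2 + 2 * N 0 1 * N 1 0 + N 1 1 ^ 2) * hM +
    (M 0 0 ^ 2 + 2 * M 0 0 * M 1 1 + M 1 1 ^ 2 - 2) * hN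
end

section
/- Let G be a group, let A be an integral domain with characteristic different from 2, and let T : G → A satisfy T(1) = 2 and T(g₁)T(g₂) = T(g₁g₂) + T(g₁⁻¹g₂) for all g₁, g₂ ∈ G. Then T(g₁g₂) = T(g₂g₁) for all g₁, g₂ ∈ G. -/
theorem skein_conj_invariant (G : Type*) [Group G] (A : Type*) [CommRing A] [IsDomain A]
    (hchar : ringChar A ≠ 2) (T : G → A)
    (hC1 : T 1 = 2)
    (hC2 : ∀ g₁ g₂ : G, T g₁ * T g₂ = T (g₁ * g₂) + T (g₁⁻¹ * g₂)) :
    ∀ g₁ g₂ : G, T (g₁ * g₂) = T (g₂ * g₁) := by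
  have hinv : ∀ g : G, T g⁻¹ = T g := by
    intro g
    have h := hC2 g 1
    simp only [mul_one, hC1] at h
    linear_combination -h
  intro g₁ g₂
  have h1 := hC2 g₁ g₂
  have h2 := hC2 g₂ g₁
  have h3 := hinv (g₁⁻¹ * g₂)
  simp only [mul_inv_rev, inv_inv] at h3
  linear_combination h2 - h1 + h3
end

section
/- Let G be a group, let A be an integral domain with characteristic different from 2, and let T : G → A satisfy T(1) = 2 and T(g₁)T(g₂) = T(g₁g₂) + T(g₁⁻¹g₂) for all g₁, g₂ ∈ G. Then for all g₁, g₂, g₃ ∈ G: T(g₁)T(g₂)T(g₃) + T(g₁g₂g₃) + T(g₁g₃g₂) − T(g₁g₂)T(g₃) − T(g₂g₃)T(g₁) − T(g₁g₃)T(g₂) = 0. -/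
theorem skein_P3 (G : Type*) [Group G] (A : Type*) [CommRing A] [IsDomain A]
    (hchar : ringChar A ≠ 2) (T : G → A)
    (hC1 : T 1 = 2)
    (hC2 : ∀ g₁ g₂ : G, T g₁ * T g₂ = T (g₁ * g₂) + T (g₁⁻¹ * g₂)) :
    ∀ g₁ g₂ g₃ : G,
      T g₁ * T g₂ * T g₃ + T (g₁ * g₂ * g₃) + T (g₁ * g₃ * g₂)
        - T (g₁ * g₂) * T g₃ - T (g₂ * g₃) * T g₁ - T (g₁ * g₃) * T g₂ = 0 := by
  have hinv : ∀ g : G, T g⁻¹ = T g := by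
    intro g
    have h := hC2 g 1
    simp only [mul_one, hC1] at h
    linear_combination -h
  have hcomm : ∀ a b : G, T (a * b) = T (b * a) := by
    intro a b
    have h1 := hC2 a b
    have h2 := hC2 b a
    have h3 : T (a⁻¹ * b) = T (b⁻¹ * a) := by
      rw [← hinv (a⁻¹ * b), mul_inv_rev, inv_inv]
    linear_combination h2 - h1 - h3
  intro g₁ g₂ g₃
  have e1 := hC2 (g₁ * g₂) g₃
  have e2 := hC2 g₁ g₂
  have e3 := hC2 (g₁⁻¹ * g₂) g₃
  have e4 := hC2 g₁ (g₂ * g₃)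
  have e5 := hC2 g₂ (g₁ * g₃)
  simp only [mul_inv_rev, inv_inv, mul_assoc] at *
  have c1 : T (g₂ * g₃) * T g₁ = T g₁ * T (g₂ * g₃) := mul_comm _ _
  have c2 : T (g₁ * g₃) * T g₂ = T g₂ * T (g₁ * g₃) := mul_comm _ _
  have c3 : T (g₂ * (g₁ * g₃)) = T (g₁ * (g₃ * g₂)) := by
    rw [hcomm]; rw [mul_assoc]
  linear_combination (T g₃) * e2 + e3 - c1 - e4 - c2 - e5 - c3
end

section
/- Let G be a group, let A be an integral domain with characteristic different from 2, and let T : G → A satisfy: T(1) = 2; T(g₁g₂) = T(g₂g₁) for all g₁, g₂; T(g₁)T(g₂)T(g₃) + T(g₁g₂g₃) + T(g₁g₃g₂) − T(g₁g₂)T(g₃) − T(g₂g₃)T(g₁) − T(g₁g₃)T(g₂) = 0 for all g₁, g₂, g₃; and T(g)² − T(g²) = 2 for all g. Then T(g₁)T(g₂) = T(g₁g₂) + T(g₁⁻¹g₂) for all g₁, g₂ ∈ G. -/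
theorem pseudo_rep_to_skein (G : Type*) [Group G] (A : Type*) [CommRing A] [IsDomain A]
    (hchar : ringChar A ≠ 2) (T : G → A)
    (hP1 : T 1 = 2)
    (hP2 : ∀ g₁ g₂ : G, T (g₁ * g₂) = T (g₂ * g₁))
    (hP3 : ∀ g₁ g₂ g₃ : G,
      T g₁ * T g₂ * T g₃ + T (g₁ * g₂ * g₃) + T (g₁ * g₃ * g₂)
        - T (g₁ * g₂) * T g₃ - T (g₂ * g₃) * T g₁ - T (g₁ * g₃) * T g₂ = 0)
    (hP4 : ∀ g : G, T g ^ 2 - T (g ^ 2) = 2) :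
    ∀ g₁ g₂ : G, T g₁ * T g₂ = T (g₁ * g₂) + T (g₁⁻¹ * g₂) := by
  have h2 : (2 : A) ≠ 0 := Ring.two_ne_zero hchar
  have hP4' : ∀ g : G, T g * T g - T (g * g) = 2 := by
    intro g; simpa [pow_two] using hP4 g
  -- key identity from P3 applied to (g, g⁻¹, h)
  have key : ∀ g h : G, T g * T g⁻¹ * T h = T g * T (g⁻¹ * h) + T g⁻¹ * T (g * h) := by
    intro g h
    have h3 := hP3 g g⁻¹ h
    have e1 : g * g⁻¹ * h = h := by group
    have e2 : g * h * g⁻¹ = g * (h * g⁻¹) := by group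
    have e3 : g * g⁻¹ = (1 : G) := by group
    have e4 : T (g * (h * g⁻¹)) = T h := by
      rw [hP2]; congr 1; group
    rw [e1, e2, e3, e4, hP1] at h3
    linear_combination h3
  -- T is invariant under inverses
  have hinv : ∀ g : G, T g⁻¹ = T g := by
    intro g
    have hk := key g g
    have e1 : g⁻¹ * g = (1 : G) := by group
    rw [e1, hP1] at hk
    have h4 := hP4' g
    have h0 : (2 : A) * (T g - T g⁻¹) = 0 := by linear_combination -hk + T g⁻¹ * h4
    rcases mul_eq_zero.mp h0 with h | h
    · exact absurd h h2
    · linear_combination -h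
  intro g h
  have hk := key g h
  rw [hinv g] at hk
  have hfac : T g * (T g * T h - T (g * h) - T (g⁻¹ * h)) = 0 := by linear_combination hk
  rcases mul_eq_zero.mp hfac with hg0 | h0
  · -- T g = 0 case
    have hsq : T (g * g) = -2 := by
      have := hP4' g; rw [hg0] at this; linear_combination -this
    -- from P3 (g, g, x): T (g * g * x) = - T x
    have hshift : ∀ x : G, T (g * g * x) = - T x := by
      intro x
      have h3 := hP3 g g x
      have e2 : T (g * x * g) = T (g * g * x) := by
        rw [hP2]; congr 1; group
      rw [e2, hg0, hsq] at h3
      have h0 : (2 : A) * (T (g * g * x) + T x) = 0 := by linear_combination h3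
      rcases mul_eq_zero.mp h0 with h | h
      · exact absurd h h2
      · linear_combination h
    have hx := hshift (g⁻¹ * h)
    have e : g * g * (g⁻¹ * h) = g * h := by group
    rw [e] at hx
    rw [hg0]
    linear_combination -hx
  · linear_combination h0
end

section
/- Let G be a group, A a commutative ring, and ρ : G → SL₂(A) a group homomorphism. Then the function T(g) := tr(ρ(g)) satisfies: T(1) = 2; T(g₁g₂) = T(g₂g₁); T(g₁)T(g₂)T(g₃) + T(g₁g₂g₃) + T(g₁g₃g₂) − T(g₁g₂)T(g₃) − T(g₂g₃)T(g₁) − T(g₁g₃)T(g₂) = 0; and T(g)² − T(g²) = 2, for all g, g₁, g₂, g₃ ∈ G. -/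
theorem trace_of_SL2_rep_is_pseudo_rep (G : Type*) [Group G] (A : Type*) [CommRing A]
    (ρ : G →* Matrix.SpecialLinearGroup (Fin 2) A) :
    (Matrix.trace (ρ 1 : Matrix (Fin 2) (Fin 2) A) = 2) ∧
    (∀ g₁ g₂ : G, Matrix.trace (ρ (g₁ * g₂) : Matrix (Fin 2) (Fin 2) A)
        = Matrix.trace (ρ (g₂ * g₁) : Matrix (Fin 2) (Fin 2) A)) ∧
    (∀ g₁ g₂ g₃ : G,
      Matrix.trace (ρ g₁ : Matrix (Fin 2) (Fin 2) A) * Matrix.trace (ρ g₂ : Matrix (Fin 2) (Fin 2) A)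
          * Matrix.trace (ρ g₃ : Matrix (Fin 2) (Fin 2) A)
        + Matrix.trace (ρ (g₁ * g₂ * g₃) : Matrix (Fin 2) (Fin 2) A)
        + Matrix.trace (ρ (g₁ * g₃ * g₂) : Matrix (Fin 2) (Fin 2) A)
        - Matrix.trace (ρ (g₁ * g₂) : Matrix (Fin 2) (Fin 2) A)
            * Matrix.trace (ρ g₃ : Matrix (Fin 2) (Fin 2) A)
        - Matrix.trace (ρ (g₂ * g₃) : Matrix (Fin 2) (Fin 2) A)
            * Matrix.trace (ρ g₁ : Matrix (Fin 2) (Fin 2) A)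
        - Matrix.trace (ρ (g₁ * g₃) : Matrix (Fin 2) (Fin 2) A)
            * Matrix.trace (ρ g₂ : Matrix (Fin 2) (Fin 2) A) = 0) ∧
    (∀ g : G, Matrix.trace (ρ g : Matrix (Fin 2) (Fin 2) A) ^ 2
        - Matrix.trace (ρ (g ^ 2) : Matrix (Fin 2) (Fin 2) A) = 2) := by
  refine ⟨?_, ?_, ?_, ?_⟩
  · simp [Matrix.trace_fin_two]
  · intro g₁ g₂
    simp only [map_mul, Matrix.SpecialLinearGroup.coe_mul, Matrix.trace_fin_two,
      Matrix.mul_apply, Fin.sum_univ_two]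
    ring
  · intro g₁ g₂ g₃
    simp only [map_mul, Matrix.SpecialLinearGroup.coe_mul, Matrix.trace_fin_two,
      Matrix.mul_apply, Fin.sum_univ_two]
    ring
  · intro g
    have hd : Matrix.det (ρ g : Matrix (Fin 2) (Fin 2) A) = 1 := (ρ g).2
    rw [Matrix.det_fin_two] at hd
    simp only [pow_two, map_mul, Matrix.SpecialLinearGroup.coe_mul, Matrix.trace_fin_two,
      Matrix.mul_apply, Fin.sum_univ_two]
    linear_combination 2 * hd
end

section
/- Let A be a commutative ring in which 2 is invertible, and suppose x, s ∈ A satisfy s² = x² − 3 and 4 is invertible in A. Define M = [[ (x+s)/2, −1 ], [ 1/4, (x−s)/2 ]] and N = [[ (x−s)/2, −1 ], [ 1/4, (x+s)/2 ]]. Then det M = det N = 1, tr M = tr N = x, and M N M = N M N. -/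
theorem trefoil_universal_deformation_rep (A : Type*) [CommRing A]
    [Invertible (2 : A)] [Invertible (4 : A)]
    (x s : A) (hs : s ^ 2 = x ^ 2 - 3)
    (M N : Matrix (Fin 2) (Fin 2) A)
    (hM : M = !![(x + s) * ⅟(2 : A), -1; ⅟(4 : A), (x - s) * ⅟(2 : A)])
    (hN : N = !![(x - s) * ⅟(2 : A), -1; ⅟(4 : A), (x + s) * ⅟(2 : A)]) :
    M.det = 1 ∧ N.det = 1 ∧ M.trace = x ∧ N.trace = x ∧ M * N * M = N * M * N := by
  have h24 : (⅟(4 : A)) = ⅟(2 : A) * ⅟(2 : A) := by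
    have h4 : (4 : A) * (⅟(2 : A) * ⅟(2 : A)) = 1 := by
      calc (4 : A) * (⅟(2 : A) * ⅟(2 : A)) = ((2:A) * ⅟(2 : A)) * ((2:A) * ⅟(2 : A)) := by ring
        _ = 1 := by rw [mul_invOf_self, one_mul]
    exact invOf_eq_right_inv h4
  set t := ⅟(2 : A) with ht
  have h2 : (2 : A) * t = 1 := mul_invOf_self 2
  subst hM hN
  rw [h24]
  refine ⟨?_, ?_, ?_, ?_, ?_⟩
  · simp only [Matrix.det_fin_two_of]
    linear_combination (-t^2) * hs + (2*t+1) * h2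
  · simp only [Matrix.det_fin_two_of]
    linear_combination (-t^2) * hs + (2*t+1) * h2
  · simp [Matrix.trace_fin_two]
    linear_combination x * h2
  · simp [Matrix.trace_fin_two]
    linear_combination x * h2
  · ext i j
    fin_cases i <;> fin_cases j <;>
      simp [Matrix.mul_apply, Fin.sum_univ_two]
    · linear_combination (-2*s*t^3) * hs
    · ring
    · ring
    · linear_combination (2*s*t^3) * hs
end

section
/- Let A be a commutative ring in which 2 is invertible, and let x, u, w ∈ A satisfy u² = (x²−1)(x²−5) and 2w² = x² − 5 + u. Define M = [[ (x+w)/2, −1 ], [ −(x²−3−u)/8, (x−w)/2 ]] and N = [[ (x−w)/2, −1 ], [ −(x²−3−u)/8, (x+w)/2 ]]. Then det M = det N = 1, tr M = tr N = x, and M N⁻¹ M⁻¹ N M = N M N⁻¹ M⁻¹ N. -/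
theorem figure_eight_universal_deformation_rep (A : Type*) [CommRing A]
    [Invertible (2 : A)]
    (x u w : A) (hu : u ^ 2 = (x ^ 2 - 1) * (x ^ 2 - 5)) (hw : 2 * w ^ 2 = x ^ 2 - 5 + u)
    (M N : Matrix (Fin 2) (Fin 2) A)
    (hM : M = !![(x + w) * ⅟(2 : A), -1;
                 -((x ^ 2 - 3 - u) * ⅟(2 : A) * ⅟(2 : A) * ⅟(2 : A)), (x - w) * ⅟(2 : A)])
    (hN : N = !![(x - w) * ⅟(2 : A), -1;
                 -((x ^ 2 - 3 - u) * ⅟(2 : A) * ⅟(2 : A) * ⅟(2 : A)), (x + w) * ⅟(2 : A)]) :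
    M.det = 1 ∧ N.det = 1 ∧ M.trace = x ∧ N.trace = x ∧
      M * N⁻¹ * M⁻¹ * N * M = N * M * N⁻¹ * M⁻¹ * N := by
  have h2 : (2 : A) * ⅟(2 : A) = 1 := mul_invOf_self 2
  set iv : A := ⅟(2 : A) with hiv
  clear_value iv
  have hw' : w ^ 2 = iv * (x ^ 2 - 5 + u) := by
    linear_combination iv * hw - w ^ 2 * h2
  have hMi : M * !![(x - w) * iv, 1; (x ^ 2 - 3 - u) * iv * iv * iv, (x + w) * iv] = 1 := by
    subst hM
    rw [Matrix.mul_fin_two]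
    ext i j
    fin_cases i <;> fin_cases j <;>
      simp [Matrix.one_apply] <;>
      first
      | ring1
      | linear_combination (-(iv ^ 2)) * hw' + (1 + 2 * iv + 4 * iv ^ 2 - x ^ 2 * iv ^ 2) * h2
  have hNi : N * !![(x + w) * iv, 1; (x ^ 2 - 3 - u) * iv * iv * iv, (x - w) * iv] = 1 := by
    subst hN
    rw [Matrix.mul_fin_two]
    ext i j
    fin_cases i <;> fin_cases j <;>
      simp [Matrix.one_apply] <;>
      first
      | ring1
      | linear_combination (-(iv ^ 2)) * hw' + (1 + 2 * iv + 4 * iv ^ 2 - x ^ 2 * iv ^ 2) * h2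
  refine ⟨?_, ?_, ?_, ?_, ?_⟩
  · subst hM
    rw [Matrix.det_fin_two_of]
    linear_combination (-(iv ^ 2)) * hw' + (1 + 2 * iv + 4 * iv ^ 2 - x ^ 2 * iv ^ 2) * h2
  · subst hN
    rw [Matrix.det_fin_two_of]
    linear_combination (-(iv ^ 2)) * hw' + (1 + 2 * iv + 4 * iv ^ 2 - x ^ 2 * iv ^ 2) * h2
  · subst hM
    rw [Matrix.trace_fin_two_of]
    linear_combination x * h2
  · subst hN
    rw [Matrix.trace_fin_two_of]
    linear_combination x * h2
  · rw [Matrix.inv_eq_right_inv hMi, Matrix.inv_eq_right_inv hNi]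
    subst hM hN
    rw [Matrix.mul_fin_two, Matrix.mul_fin_two, Matrix.mul_fin_two, Matrix.mul_fin_two,
      Matrix.mul_fin_two, Matrix.mul_fin_two, Matrix.mul_fin_two, Matrix.mul_fin_two]
    ext i j
    fin_cases i <;> fin_cases j <;>
      simp only [Fin.mk_zero, Fin.mk_one, Fin.isValue, Matrix.of_apply, Matrix.cons_val', Matrix.cons_val_zero,
        Matrix.cons_val_one, Matrix.head_cons, Matrix.head_fin_const, Matrix.empty_val',
        Matrix.cons_val_fin_one] <;>
      first
      | ring1
      | linear_combination ((32:A)*w*iv^7)*hu + ((50:A)*w*iv^6 + (2:A)*w^3*iv^5 + (22:A)*u*w*iv^6 + (-4:A)*x^2*w*iv^5 + (-18:A)*x^2*w*iv^6)*hw' + ((-56:A)*x^2*w*iv^6 + (-8:A)*x^2*u*w*iv^6 + (-2:A)*x^4*w*iv^5 + (12:A)*x^4*w*iv^6)*h2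
      | linear_combination ((-32:A)*w*iv^7)*hu + ((-25:A)*w*iv^6*2 + (-2:A)*w^3*iv^5 + (-22:A)*u*w*iv^6 + (4:A)*x^2*w*iv^5 + (18:A)*x^2*w*iv^6)*hw' + ((56:A)*x^2*w*iv^6 + (8:A)*x^2*u*w*iv^6 + (2:A)*x^4*w*iv^5 + (-12:A)*x^4*w*iv^6)*h2
end

section
/- Let A be a commutative ring in which 2 is invertible, and let x, s, w ∈ A satisfy w² = x² − 4s and 64s³ − 16(2x²+5)s² + 4(x⁴+9x²+6)s − 4x⁴ − 6x² − 1 = 0. Define M = [[ (x+w)/2, −1 ], [ 1−s, (x−w)/2 ]] and N = [[ (x+w)/2, 1 ], [ s−1, (x−w)/2 ]]. Then det M = det N = 1 and M N M⁻¹ N⁻¹ M N M = N M N M⁻¹ N⁻¹ M N. -/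
set_option maxHeartbeats 2000000 in
theorem five_two_knot_universal_deformation_rep (A : Type*) [CommRing A]
    [Invertible (2 : A)]
    (x s w : A) (hw : w ^ 2 = x ^ 2 - 4 * s)
    (hs : 64 * s ^ 3 - 16 * (2 * x ^ 2 + 5) * s ^ 2
        + 4 * (x ^ 4 + 9 * x ^ 2 + 6) * s - 4 * x ^ 4 - 6 * x ^ 2 - 1 = 0)
    (M N : Matrix (Fin 2) (Fin 2) A)
    (hM : M = !![(x + w) * ⅟(2 : A), -1; 1 - s, (x - w) * ⅟(2 : A)])
    (hN : N = !![(x + w) * ⅟(2 : A), 1; s - 1, (x - w) * ⅟(2 : A)]) :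
    M.det = 1 ∧ N.det = 1 ∧
      M * N * M⁻¹ * N⁻¹ * M * N * M = N * M * N * M⁻¹ * N⁻¹ * M * N := by
  have h2 : (2 : A) * ⅟(2 : A) = 1 := mul_invOf_self 2
  have hd : (x - w) * ⅟(2 : A) = x - (x + w) * ⅟(2 : A) := by
    linear_combination x * h2
  obtain ⟨a, ha2, hM, hN⟩ :
      ∃ a : A, a ^ 2 = x * a - s ∧ M = !![a, -1; 1 - s, x - a]
        ∧ N = !![a, 1; s - 1, x - a] := by
    refine ⟨(x + w) * ⅟(2 : A), ?_, by rw [hM, hd], by rw [hN, hd]⟩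
    linear_combination ((x ^ 2 + x * w) * ⅟(2:A) - s * (2 * ⅟(2:A) + 1)) * h2
      + ⅟(2:A) ^ 2 * hw
  clear hw hd h2
  have hdetM : M.det = 1 := by
    rw [hM, Matrix.det_fin_two_of]; linear_combination -ha2
  have hdetN : N.det = 1 := by
    rw [hN, Matrix.det_fin_two_of]; linear_combination -ha2
  have hMi : M⁻¹ = !![x - a, 1; s - 1, a] := by
    refine Matrix.inv_eq_right_inv ?_
    rw [hM]
    ext i j
    fin_cases i <;> fin_cases j
    · simp [Matrix.mul_apply, Fin.sum_univ_succ]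
      linear_combination -ha2
    · simp [Matrix.mul_apply, Fin.sum_univ_succ]
    · simp [Matrix.mul_apply, Fin.sum_univ_succ]
      ring
    · simp [Matrix.mul_apply, Fin.sum_univ_succ]
      linear_combination -ha2
  have hNi : N⁻¹ = !![x - a, -1; 1 - s, a] := by
    refine Matrix.inv_eq_right_inv ?_
    rw [hN]
    ext i j
    fin_cases i <;> fin_cases j
    · simp [Matrix.mul_apply, Fin.sum_univ_succ]
      linear_combination -ha2
    · simp [Matrix.mul_apply, Fin.sum_univ_succ]
    · simp [Matrix.mul_apply, Fin.sum_univ_succ]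
      ring
    · simp [Matrix.mul_apply, Fin.sum_univ_succ]
      linear_combination -ha2
  refine ⟨hdetM, hdetN, ?_⟩
  rw [hMi, hNi, hM, hN]
  ext i j
  fin_cases i <;> fin_cases j
  · simp [Matrix.mul_apply, Fin.sum_univ_succ]
    ring
  · simp [Matrix.mul_apply, Fin.sum_univ_succ]
    linear_combination (-14*a^4 + 28*a^3*x - 18*a^2*x^2 + 84*a^2*s - 70*a^2 + 4*a*x^3 - 84*a*x*s + 70*a*x + 52*x^2*s - 48*x^2 - 126*s^2 + 154*s - 42) * ha2 + (2) * hs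
  · simp [Matrix.mul_apply, Fin.sum_univ_succ]
    linear_combination (-14*a^4*s + 14*a^4 + 28*a^3*x*s - 28*a^3*x - 18*a^2*x^2*s + 18*a^2*x^2 + 84*a^2*s^2 - 154*a^2*s + 70*a^2 + 4*a*x^3*s - 4*a*x^3 - 84*a*x*s^2 + 154*a*x*s - 70*a*x + 52*x^2*s^2 - 100*x^2*s + 48*x^2 - 126*s^3 + 280*s^2 - 196*s + 42) * ha2 + (2*s - 2) * hs
  · simp [Matrix.mul_apply, Fin.sum_univ_succ]
    ring
end
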